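/- arXiv:2401.12701 — 3 statements merged into one kernel-verified Lean document; each statement's English description precedes it below -/
import Mathlib

section
/- Fix an integer k ≥ 1 and let T^{(k)}(x) := Σ_{n≥0} (−1)^n · p^{n + (k+1)n(n−1)/2}/(p;p)_n · x^n ∈ ℚ(p)[[x]]. Since T^{(k)} has constant coefficient 1, it is a unit; define G^{(k)}(x) := T^{(k)}(p·x) / T^{(k)}(x). Then G^{(k)} satisfies the functional equation G^{(k)}(x) = 1 + p·x·∏_{j=0}^{k} G^{(k)}(p^j·x), where for a scalar c ∈ ℚ(p), F(c·x) denotes the power series whose n-th coefficient is c^n times the n-th coefficient of F. -/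
/-!
Comparing consecutive coefficients shows that `T = T^(k)` satisfies the `p`-difference equation
`T(p x) = T(x) + p x T(p^(k+1) x)`. Dividing it by `T(x)` gives
`G(x) = 1 + p x T(p^(k+1) x) / T(x)`, and `T(p^(k+1) x) / T(x)` is the telescoping product
`∏_{j=0}^{k} T(p^(j+1) x) / T(p^j x) = ∏_{j=0}^{k} G(p^j x)`.
-/

/-- The formal power series `T^(k)(x) = Σ_{n≥0} (-1)^n p^{n+(k+1)n(n-1)/2}/(p;p)_n x^n`
with coefficients in `ℚ(p) = RatFunc ℚ`. -/
noncomputable def Tser (k : ℕ) : PowerSeries (RatFunc ℚ) :=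
  PowerSeries.mk fun n =>
    (-1 : RatFunc ℚ) ^ n *
      RatFunc.X ^ (n + (k + 1) * (n * (n - 1) / 2)) /
        ∏ i ∈ Finset.range n, (1 - RatFunc.X ^ (i + 1))

/-- `G^(k)(x) := T^(k)(p·x) / T^(k)(x)` (the inverse exists since `T^(k)` has constant
coefficient `1`). -/
noncomputable def Gser (k : ℕ) : PowerSeries (RatFunc ℚ) :=
  PowerSeries.rescale RatFunc.X (Tser k) * (Tser k)⁻¹

open PowerSeries Finset

theorem RatFunc.one_sub_X_pow_ne_zero {K : Type*} [Field K] {n : ℕ} (hn : n ≠ 0) :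
    (1 : RatFunc K) - RatFunc.X ^ n ≠ 0 := by
  have hpoly : (Polynomial.X ^ n - 1 : Polynomial K) ≠ 0 := by
    simpa using Polynomial.X_pow_sub_C_ne_zero (Nat.pos_of_ne_zero hn) (1 : K)
  rw [← neg_sub, neg_ne_zero]
  simpa using RatFunc.algebraMap_ne_zero hpoly

namespace PowerSeries

variable {K : Type*} [Field K]

theorem constantCoeff_rescale {R : Type*} [CommSemiring R] (a : R) (φ : R⟦X⟧) :
    constantCoeff (rescale a φ) = constantCoeff φ := by
  simp [← coeff_zero_eq_constantCoeff, coeff_rescale]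

theorem rescale_inv (a : K) (φ : K⟦X⟧) : rescale a φ⁻¹ = (rescale a φ)⁻¹ := by
  by_cases hφ : constantCoeff φ = 0
  · rw [inv_eq_zero.2 hφ, inv_eq_zero.2 (by rwa [constantCoeff_rescale]), map_zero]
  · rw [eq_inv_iff_mul_eq_one (by rwa [constantCoeff_rescale]), ← map_mul,
      PowerSeries.inv_mul_cancel _ hφ, map_one]

theorem prod_range_rescale_pow_mul_inv (a : K) {φ : K⟦X⟧} (hφ : constantCoeff φ ≠ 0)
    (m : ℕ) :
    ∏ j ∈ range m, rescale (a ^ j) (rescale a φ * φ⁻¹) = rescale (a ^ m) φ * φ⁻¹ := by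
  induction m with
  | zero => simp [PowerSeries.mul_inv_cancel _ hφ]
  | succ m ih =>
    have hm : rescale (a ^ m) φ * (rescale (a ^ m) φ)⁻¹ = 1 :=
      PowerSeries.mul_inv_cancel _ (by rwa [constantCoeff_rescale])
    rw [prod_range_succ, ih, map_mul, rescale_rescale, rescale_inv, ← pow_succ']
    linear_combination (rescale (a ^ (m + 1)) φ * φ⁻¹) * hm

theorem rescale_mul_inv_eq_one_add_prod (a : K) {φ : K⟦X⟧} (hφ : constantCoeff φ ≠ 0)
    (k : ℕ) (h : rescale a φ = φ + C a * X * rescale (a ^ (k + 1)) φ) :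
    rescale a φ * φ⁻¹ =
      1 + C a * X * ∏ j ∈ range (k + 1), rescale (a ^ j) (rescale a φ * φ⁻¹) := by
  rw [prod_range_rescale_pow_mul_inv a hφ]
  conv_lhs => rw [h]
  rw [add_mul, PowerSeries.mul_inv_cancel _ hφ, mul_assoc]

end PowerSeries

theorem constantCoeff_Tser (k : ℕ) : constantCoeff (Tser k) = 1 := by
  simp [Tser]

theorem coeff_succ_Tser (k n : ℕ) :
    (1 - RatFunc.X ^ (n + 1)) * coeff (n + 1) (Tser k) =
      -(RatFunc.X ^ (1 + (k + 1) * n) * coeff n (Tser k)) := by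
  have hD : ∏ i ∈ range n, (1 - (RatFunc.X : RatFunc ℚ) ^ (i + 1)) ≠ 0 :=
    prod_ne_zero_iff.2 fun i _ => RatFunc.one_sub_X_pow_ne_zero i.succ_ne_zero
  have hn := RatFunc.one_sub_X_pow_ne_zero (K := ℚ) n.succ_ne_zero
  have hexp : n + 1 + (k + 1) * ((n + 1) * (n + 1 - 1) / 2) =
      1 + (k + 1) * n + (n + (k + 1) * (n * (n - 1) / 2)) := by
    simp only [← Nat.choose_two_right, Nat.choose_succ_succ', Nat.choose_one_right]
    ring
  simp only [Tser, coeff_mk, prod_range_succ, hexp]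
  field_simp
  ring

theorem rescale_X_Tser (k : ℕ) :
    rescale RatFunc.X (Tser k) =
      Tser k + C RatFunc.X * X * rescale (RatFunc.X ^ (k + 1)) (Tser k) := by
  ext (_ | n)
  · simp [coeff_rescale, mul_assoc]
  · rw [mul_assoc, map_add, coeff_C_mul, coeff_succ_X_mul, coeff_rescale, coeff_rescale]
    linear_combination -(coeff_succ_Tser k n)

theorem stmt_2_general (k : ℕ) :
    Gser k = 1 + PowerSeries.C (RatFunc.X : RatFunc ℚ) * PowerSeries.X *
      ∏ j ∈ Finset.range (k + 1), PowerSeries.rescale (RatFunc.X ^ j) (Gser k) :=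
  rescale_mul_inv_eq_one_add_prod _ (by rw [constantCoeff_Tser]; exact one_ne_zero) k
    (rescale_X_Tser k)

/-- the functional equation
`G^(k)(x) = 1 + p·x·∏_{j=0}^{k} G^(k)(p^j·x)`. -/
theorem stmt_2 (k : ℕ) (hk : 1 ≤ k) :
    Gser k = 1 + PowerSeries.C (RatFunc.X : RatFunc ℚ) * PowerSeries.X *
      ∏ j ∈ Finset.range (k + 1), PowerSeries.rescale (RatFunc.X ^ j) (Gser k) :=
  stmt_2_general k
end

section
/- Let r ≥ 2 and let a_1, …, a_r be nonnegative integers. For an integer k, define G̃_k(a_1,…,a_r) := Σ_c p^{1 + Σ_{i=1}^{r−1} c_i} ∈ ℚ(p), the sum being over all integer sequences (c_1,…,c_{r−1}) with c_0 := 1, 1 ≤ c_i ≤ c_{i−1} + a_i for 1 ≤ i ≤ r−1, and c_{r−1} + a_r = k (heaps of type II whose bottom piece has right abscissa k); for r = 1 set G̃_k(a_1) := p if k = 1 + a_1 and 0 otherwise. Then for every k ≥ a_r + 2, G̃_k(a_1,…,a_r) = p·G̃_{k−1}(a_1,…,a_r) − p^{k−a_r}·G̃_{k−1−a_r}(a_1,…,a_{r−1}).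 -/
attribute [local instance] Classical.propDecidable

/-- The sequence of left abscissae of a heap of type II: `c_0 = 1` and `c_i` (for
`1 ≤ i ≤ m`) is given by the `i`-th entry of `c`. -/
def leftAbs (m N : ℕ) (c : Fin m → Fin N) : ℕ → ℕ
  | 0 => 1
  | i + 1 => if h : i < m then (c ⟨i, h⟩ : ℕ) else 0

/-- `G̃_k(a_1,…,a_r) = Σ_c p^{1 + Σ_{i=1}^{r-1} c_i}`, summed over all sequences
`(c_1,…,c_{r-1})` with `c_0 := 1`, `1 ≤ c_i ≤ c_{i-1} + a_i` for `1 ≤ i ≤ r-1`, and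
`c_{r-1} + a_r = k` (heaps of type II whose bottom piece has right abscissa `k`).
For `r = 1` this reduces to `p` if `k = 1 + a_1` and `0` otherwise. -/
noncomputable def GtK (r : ℕ) (a : ℕ → ℕ) (k : ℕ) : RatFunc ℚ :=
  ∑ c ∈ Finset.univ.filter
      (fun c : Fin (r - 1) → Fin (2 + ∑ t ∈ Finset.Icc 1 (r - 1), a t) =>
        (∀ i ∈ Finset.Icc 1 (r - 1),
          1 ≤ leftAbs _ _ c i ∧ leftAbs _ _ c i ≤ leftAbs _ _ c (i - 1) + a i) ∧
        leftAbs _ _ c (r - 1) + a r = k),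
    RatFunc.X ^ (1 + ∑ i ∈ Finset.Icc 1 (r - 1), leftAbs _ _ c i)

lemma leftAbs_succ {m N : ℕ} (c : Fin m → Fin N) {i : ℕ} (h : i < m) :
    leftAbs m N c (i + 1) = (c ⟨i, h⟩ : ℕ) := by
  simp [leftAbs, h]

lemma leftAbs_last {m N : ℕ} (c : Fin (m + 1) → Fin N) :
    leftAbs (m + 1) N c (m + 1) = (c (Fin.last m) : ℕ) :=
  leftAbs_succ c (Nat.lt_succ_self m)

lemma leftAbs_bound {m N : ℕ} (c : Fin m → Fin N) (a : ℕ → ℕ) {n : ℕ}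
    (hc : ∀ i ∈ Finset.Icc 1 n, leftAbs m N c i ≤ leftAbs m N c (i - 1) + a i) :
    ∀ j, j ≤ n → leftAbs m N c j ≤ 1 + ∑ t ∈ Finset.Icc 1 j, a t := by
  intro j
  induction j with
  | zero => intro _; simp [leftAbs]
  | succ j ih =>
    intro hj
    have h1 := hc (j + 1) (Finset.mem_Icc.mpr ⟨by omega, hj⟩)
    have h2 := ih (by omega)
    rw [Finset.sum_Icc_succ_top (by omega : 1 ≤ j + 1)]
    simp only [Nat.add_sub_cancel] at h1
    omega

/-- replace the last entry -/
def setLast {m N : ℕ} (c : Fin (m + 1) → Fin N) (x : ℕ) (h : x < N) : Fin (m + 1) → Fin N :=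
  Function.update c (Fin.last m) ⟨x, h⟩

lemma apply_setLast_last_val {m N : ℕ} (c : Fin (m + 1) → Fin N) (x : ℕ) (h : x < N) :
    ((setLast c x h) (Fin.last m) : ℕ) = x := by
  simp [setLast, Function.update_self]

lemma leftAbs_setLast_lt {m N : ℕ} (j : ℕ) (hj : j ≤ m) (c : Fin (m + 1) → Fin N)
    (x : ℕ) (h : x < N) :
    leftAbs (m + 1) N (setLast c x h) j = leftAbs (m + 1) N c j := by
  cases j with
  | zero => rfl
  | succ i =>
    have hi : i < m + 1 := by omega
    rw [leftAbs_succ _ hi, leftAbs_succ _ hi]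
    congr 1
    apply Function.update_of_ne
    intro he
    have := congrArg Fin.val he
    simp [Fin.last] at this
    omega

lemma leftAbs_setLast_last {m N : ℕ} (c : Fin (m + 1) → Fin N) (x : ℕ) (h : x < N) :
    leftAbs (m + 1) N (setLast c x h) (m + 1) = x := by
  rw [leftAbs_last, apply_setLast_last_val]

lemma sum_leftAbs_setLast {m N : ℕ} (c : Fin (m + 1) → Fin N) (x : ℕ) (h : x < N) :
    ∑ i ∈ Finset.Icc 1 m, leftAbs (m + 1) N (setLast c x h) i
      = ∑ i ∈ Finset.Icc 1 m, leftAbs (m + 1) N c i :=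
  Finset.sum_congr rfl fun i hi => leftAbs_setLast_lt i (Finset.mem_Icc.mp hi).2 c x h

lemma setLast_setLast {m N : ℕ} (c : Fin (m + 1) → Fin N) (x y : ℕ) (hx : x < N) (hy : y < N) :
    setLast (setLast c x hx) y hy = setLast c y hy := by
  simp [setLast, Function.update_idem]

lemma setLast_eq_self {m N : ℕ} (c : Fin (m + 1) → Fin N) (x : ℕ) (h : x < N)
    (hx : x = (c (Fin.last m) : ℕ)) : setLast c x h = c := by
  subst hx
  have : (⟨(c (Fin.last m) : ℕ), h⟩ : Fin N) = c (Fin.last m) := Fin.ext rfl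
  rw [setLast, this, Function.update_eq_self]

/-- restrict to the first `m` entries -/
def restrictF {m N N' : ℕ} (c : Fin (m + 1) → Fin N)
    (hbd : ∀ t : Fin m, (c (Fin.castSucc t) : ℕ) < N') : Fin m → Fin N' :=
  fun t => ⟨(c (Fin.castSucc t) : ℕ), hbd t⟩

/-- extend by a chosen last entry -/
def extendF {m N N' : ℕ} (hle : N' ≤ N) (c' : Fin m → Fin N') (x : ℕ) (h : x < N) :
    Fin (m + 1) → Fin N :=
  fun t => if ht : (t : ℕ) < m then ⟨(c' ⟨t, ht⟩ : ℕ), lt_of_lt_of_le (Fin.is_lt _) hle⟩ else ⟨x, h⟩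

lemma leftAbs_restrictF {m N N' : ℕ} (j : ℕ) (hj : j ≤ m) (c : Fin (m + 1) → Fin N)
    (hbd : ∀ t : Fin m, (c (Fin.castSucc t) : ℕ) < N') :
    leftAbs m N' (restrictF c hbd) j = leftAbs (m + 1) N c j := by
  cases j with
  | zero => rfl
  | succ i =>
    have hi : i < m := by omega
    rw [leftAbs_succ _ hi, leftAbs_succ _ (by omega : i < m + 1)]
    rfl

lemma sum_leftAbs_restrictF {m N N' : ℕ} (c : Fin (m + 1) → Fin N)
    (hbd : ∀ t : Fin m, (c (Fin.castSucc t) : ℕ) < N') :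
    ∑ i ∈ Finset.Icc 1 m, leftAbs m N' (restrictF c hbd) i
      = ∑ i ∈ Finset.Icc 1 m, leftAbs (m + 1) N c i :=
  Finset.sum_congr rfl fun i hi => leftAbs_restrictF i (Finset.mem_Icc.mp hi).2 c hbd

lemma leftAbs_extendF {m N N' : ℕ} (j : ℕ) (hj : j ≤ m) (hle : N' ≤ N)
    (c' : Fin m → Fin N') (x : ℕ) (h : x < N) :
    leftAbs (m + 1) N (extendF hle c' x h) j = leftAbs m N' c' j := by
  cases j with
  | zero => rfl
  | succ i =>
    have hi : i < m := by omega
    rw [leftAbs_succ _ (by omega : i < m + 1), leftAbs_succ _ hi]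
    simp [extendF, hi]

lemma leftAbs_extendF_last {m N N' : ℕ} (hle : N' ≤ N) (c' : Fin m → Fin N') (x : ℕ)
    (h : x < N) : leftAbs (m + 1) N (extendF hle c' x h) (m + 1) = x := by
  rw [leftAbs_last]
  simp [extendF]

lemma sum_leftAbs_extendF {m N N' : ℕ} (hle : N' ≤ N) (c' : Fin m → Fin N') (x : ℕ)
    (h : x < N) :
    ∑ i ∈ Finset.Icc 1 m, leftAbs (m + 1) N (extendF hle c' x h) i
      = ∑ i ∈ Finset.Icc 1 m, leftAbs m N' c' i :=
  Finset.sum_congr rfl fun i hi => leftAbs_extendF i (Finset.mem_Icc.mp hi).2 hle c' x h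

lemma restrictF_extendF {m N N' : ℕ} (hle : N' ≤ N) (c' : Fin m → Fin N') (x : ℕ) (h : x < N)
    (hbd : ∀ t : Fin m, ((extendF hle c' x h) (Fin.castSucc t) : ℕ) < N') :
    restrictF (extendF hle c' x h) hbd = c' := by
  funext t
  apply Fin.ext
  have ht : ((Fin.castSucc t : Fin (m + 1)) : ℕ) < m := by simpa using t.isLt
  simp [restrictF, extendF, ht]

lemma extendF_restrictF {m N N' : ℕ} (hle : N' ≤ N) (c : Fin (m + 1) → Fin N)
    (hbd : ∀ t : Fin m, (c (Fin.castSucc t) : ℕ) < N') (x : ℕ) (h : x < N) :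
    extendF hle (restrictF c hbd) x h = setLast c x h := by
  funext t
  by_cases ht : (t : ℕ) < m
  · have htne : t ≠ Fin.last m := by
      intro he; rw [he] at ht; simp at ht
    apply Fin.ext
    have hcast : Fin.castSucc (⟨(t : ℕ), ht⟩ : Fin m) = t := Fin.ext rfl
    simp [extendF, restrictF, ht, hcast, setLast, Function.update_of_ne htne]
  · have hte : t = Fin.last m := by
      apply Fin.ext; have := t.isLt; simp [Fin.last]; omega
    subst hte
    apply Fin.ext
    simp [extendF, ht, setLast, Function.update_self]

lemma sum_split {α M : Type*} [AddCommMonoid M] (s : Finset α) (p q : α → Prop)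
    [DecidablePred p] [DecidablePred q] (h : ∀ x ∈ s, q x ↔ ¬ p x) (f : α → M) :
    ∑ x ∈ s, f x = ∑ x ∈ s.filter p, f x + ∑ x ∈ s.filter q, f x := by
  rw [Finset.sum_filter, Finset.sum_filter, ← Finset.sum_add_distrib]
  refine Finset.sum_congr rfl fun x hx => ?_
  by_cases hp : p x
  · have hq : ¬ q x := by rw [h x hx]; exact not_not_intro hp
    simp [hp, hq]
  · have hq : q x := (h x hx).mpr hp
    simp [hp, hq]

lemma key (m : ℕ) (a : ℕ → ℕ) (k N N' : ℕ)
    (hN : N = 2 + ∑ t ∈ Finset.Icc 1 (m + 1), a t)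
    (hN' : N' = 2 + ∑ t ∈ Finset.Icc 1 m, a t)
    (hk : a (m + 2) + 2 ≤ k) :
    (∑ c ∈ Finset.univ.filter
        (fun c : Fin (m + 1) → Fin N =>
          (∀ i ∈ Finset.Icc 1 (m + 1),
            1 ≤ leftAbs (m + 1) N c i ∧
              leftAbs (m + 1) N c i ≤ leftAbs (m + 1) N c (i - 1) + a i) ∧
          leftAbs (m + 1) N c (m + 1) + a (m + 2) = k),
      RatFunc.X ^ (1 + ∑ i ∈ Finset.Icc 1 (m + 1), leftAbs (m + 1) N c i) : RatFunc ℚ)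
    = RatFunc.X * (∑ c ∈ Finset.univ.filter
        (fun c : Fin (m + 1) → Fin N =>
          (∀ i ∈ Finset.Icc 1 (m + 1),
            1 ≤ leftAbs (m + 1) N c i ∧
              leftAbs (m + 1) N c i ≤ leftAbs (m + 1) N c (i - 1) + a i) ∧
          leftAbs (m + 1) N c (m + 1) + a (m + 2) = k - 1),
      RatFunc.X ^ (1 + ∑ i ∈ Finset.Icc 1 (m + 1), leftAbs (m + 1) N c i))
    - RatFunc.X ^ (k - a (m + 2)) * (∑ c ∈ Finset.univ.filter
        (fun c : Fin m → Fin N' =>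
          (∀ i ∈ Finset.Icc 1 m,
            1 ≤ leftAbs m N' c i ∧
              leftAbs m N' c i ≤ leftAbs m N' c (i - 1) + a i) ∧
          leftAbs m N' c m + a (m + 1) = k - 1 - a (m + 2)),
      RatFunc.X ^ (1 + ∑ i ∈ Finset.Icc 1 m, leftAbs m N' c i)) := by
  have hsum : ∑ t ∈ Finset.Icc 1 (m + 1), a t = (∑ t ∈ Finset.Icc 1 m, a t) + a (m + 1) :=
    Finset.sum_Icc_succ_top (by omega) a
  have hNN : N' + a (m + 1) = N := by omega
  have hle : N' ≤ N := by omega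
  -- step 1 : multiply in the X
  have hmul :
      (RatFunc.X :  RatFunc ℚ) * (∑ c ∈ Finset.univ.filter
        (fun c : Fin (m + 1) → Fin N =>
          (∀ i ∈ Finset.Icc 1 (m + 1),
            1 ≤ leftAbs (m + 1) N c i ∧
              leftAbs (m + 1) N c i ≤ leftAbs (m + 1) N c (i - 1) + a i) ∧
          leftAbs (m + 1) N c (m + 1) + a (m + 2) = k - 1),
      RatFunc.X ^ (1 + ∑ i ∈ Finset.Icc 1 (m + 1), leftAbs (m + 1) N c i))
      = ∑ c ∈ Finset.univ.filter
        (fun c : Fin (m + 1) → Fin N =>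
          (∀ i ∈ Finset.Icc 1 (m + 1),
            1 ≤ leftAbs (m + 1) N c i ∧
              leftAbs (m + 1) N c i ≤ leftAbs (m + 1) N c (i - 1) + a i) ∧
          leftAbs (m + 1) N c (m + 1) + a (m + 2) = k - 1),
      RatFunc.X ^ (2 + ∑ i ∈ Finset.Icc 1 (m + 1), leftAbs (m + 1) N c i) := by
    rw [Finset.mul_sum]
    refine Finset.sum_congr rfl fun c _ => ?_
    rw [mul_comm, ← pow_succ]
    congr 1
    omega
  -- step 2 : split according to whether the last piece can be shifted right
  have hsplit :
      (∑ c ∈ Finset.univ.filter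
        (fun c : Fin (m + 1) → Fin N =>
          (∀ i ∈ Finset.Icc 1 (m + 1),
            1 ≤ leftAbs (m + 1) N c i ∧
              leftAbs (m + 1) N c i ≤ leftAbs (m + 1) N c (i - 1) + a i) ∧
          leftAbs (m + 1) N c (m + 1) + a (m + 2) = k - 1),
      RatFunc.X ^ (2 + ∑ i ∈ Finset.Icc 1 (m + 1), leftAbs (m + 1) N c i) : RatFunc ℚ)
      = (∑ c ∈ (Finset.univ.filter
        (fun c : Fin (m + 1) → Fin N =>
          (∀ i ∈ Finset.Icc 1 (m + 1),
            1 ≤ leftAbs (m + 1) N c i ∧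
              leftAbs (m + 1) N c i ≤ leftAbs (m + 1) N c (i - 1) + a i) ∧
          leftAbs (m + 1) N c (m + 1) + a (m + 2) = k - 1)).filter
          (fun c : Fin (m + 1) → Fin N =>
            leftAbs (m + 1) N c (m + 1) + 1 ≤ leftAbs (m + 1) N c m + a (m + 1)),
        RatFunc.X ^ (2 + ∑ i ∈ Finset.Icc 1 (m + 1), leftAbs (m + 1) N c i))
      + (∑ c ∈ (Finset.univ.filter
        (fun c : Fin (m + 1) → Fin N =>
          (∀ i ∈ Finset.Icc 1 (m + 1),
            1 ≤ leftAbs (m + 1) N c i ∧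
              leftAbs (m + 1) N c i ≤ leftAbs (m + 1) N c (i - 1) + a i) ∧
          leftAbs (m + 1) N c (m + 1) + a (m + 2) = k - 1)).filter
          (fun c : Fin (m + 1) → Fin N =>
            leftAbs (m + 1) N c m + a (m + 1) ≤ leftAbs (m + 1) N c (m + 1)),
        RatFunc.X ^ (2 + ∑ i ∈ Finset.Icc 1 (m + 1), leftAbs (m + 1) N c i)) := by
    refine sum_split _ _ _ (fun c hc => ?_) _
    simp only [Finset.mem_filter, Finset.mem_univ, true_and] at hc
    have := (hc.1 (m + 1) (Finset.mem_Icc.mpr ⟨by omega, le_rfl⟩)).2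
    simp only [Nat.add_sub_cancel] at this
    omega
  have hgood :
      (∑ c ∈ (Finset.univ.filter
        (fun c : Fin (m + 1) → Fin N =>
          (∀ i ∈ Finset.Icc 1 (m + 1),
            1 ≤ leftAbs (m + 1) N c i ∧
              leftAbs (m + 1) N c i ≤ leftAbs (m + 1) N c (i - 1) + a i) ∧
          leftAbs (m + 1) N c (m + 1) + a (m + 2) = k - 1)).filter
          (fun c : Fin (m + 1) → Fin N =>
            leftAbs (m + 1) N c (m + 1) + 1 ≤ leftAbs (m + 1) N c m + a (m + 1)),
        RatFunc.X ^ (2 + ∑ i ∈ Finset.Icc 1 (m + 1), leftAbs (m + 1) N c i) : RatFunc ℚ)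
      = ∑ c ∈ Finset.univ.filter
        (fun c : Fin (m + 1) → Fin N =>
          (∀ i ∈ Finset.Icc 1 (m + 1),
            1 ≤ leftAbs (m + 1) N c i ∧
              leftAbs (m + 1) N c i ≤ leftAbs (m + 1) N c (i - 1) + a i) ∧
          leftAbs (m + 1) N c (m + 1) + a (m + 2) = k),
      RatFunc.X ^ (1 + ∑ i ∈ Finset.Icc 1 (m + 1), leftAbs (m + 1) N c i) := by
    refine Finset.sum_bij'
      (fun c hc => setLast c ((c (Fin.last m) : ℕ) + 1) (by
        simp only [Finset.mem_filter, Finset.mem_univ, true_and] at hc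
        obtain ⟨⟨hP1, hP2⟩, hcond⟩ := hc
        have hbd := leftAbs_bound c a (fun i hi => (hP1 i hi).2) m (by omega)
        have hlast := leftAbs_last c
        omega))
      (fun c hc => setLast c ((c (Fin.last m) : ℕ) - 1) (by
        have := (c (Fin.last m)).isLt; omega))
      ?_ ?_ ?_ ?_ ?_
    · intro c hc
      simp only [Finset.mem_filter, Finset.mem_univ, true_and] at hc ⊢
      obtain ⟨⟨hP1, hP2⟩, hcond⟩ := hc
      have hlast := leftAbs_last c
      refine ⟨fun i hi => ?_, ?_⟩
      · rw [Finset.mem_Icc] at hi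
        by_cases him : i ≤ m
        · rw [leftAbs_setLast_lt i him, leftAbs_setLast_lt (i - 1) (by omega)]
          exact hP1 i (Finset.mem_Icc.mpr ⟨hi.1, hi.2⟩)
        · have hieq : i = m + 1 := by omega
          subst hieq
          rw [leftAbs_setLast_last, Nat.add_sub_cancel, leftAbs_setLast_lt m le_rfl]
          exact ⟨by omega, by omega⟩
      · rw [leftAbs_setLast_last]
        omega
    · intro c hc
      simp only [Finset.mem_filter, Finset.mem_univ, true_and] at hc ⊢
      obtain ⟨hP1, hP2⟩ := hc
      have hlast := leftAbs_last c
      have hPm := hP1 (m + 1) (Finset.mem_Icc.mpr ⟨by omega, le_rfl⟩)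
      simp only [Nat.add_sub_cancel] at hPm
      refine ⟨⟨fun i hi => ?_, ?_⟩, ?_⟩
      · rw [Finset.mem_Icc] at hi
        by_cases him : i ≤ m
        · rw [leftAbs_setLast_lt i him, leftAbs_setLast_lt (i - 1) (by omega)]
          exact hP1 i (Finset.mem_Icc.mpr ⟨hi.1, hi.2⟩)
        · have hieq : i = m + 1 := by omega
          subst hieq
          rw [leftAbs_setLast_last, Nat.add_sub_cancel, leftAbs_setLast_lt m le_rfl]
          exact ⟨by omega, by omega⟩
      · rw [leftAbs_setLast_last]
        omega
      · rw [leftAbs_setLast_last, leftAbs_setLast_lt m le_rfl]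
        omega
    · intro c hc
      beta_reduce
      rw [setLast_setLast]
      apply setLast_eq_self
      rw [apply_setLast_last_val]
      omega
    · intro c hc
      simp only [Finset.mem_filter, Finset.mem_univ, true_and] at hc
      have hlast := leftAbs_last c
      beta_reduce
      rw [setLast_setLast]
      apply setLast_eq_self
      rw [apply_setLast_last_val]
      omega
    · intro c hc
      beta_reduce
      congr 1
      rw [Finset.sum_Icc_succ_top (by omega : 1 ≤ m + 1),
        Finset.sum_Icc_succ_top (by omega : 1 ≤ m + 1),
        sum_leftAbs_setLast, leftAbs_setLast_last, leftAbs_last]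
      omega
  have hbad :
      (∑ c ∈ (Finset.univ.filter
        (fun c : Fin (m + 1) → Fin N =>
          (∀ i ∈ Finset.Icc 1 (m + 1),
            1 ≤ leftAbs (m + 1) N c i ∧
              leftAbs (m + 1) N c i ≤ leftAbs (m + 1) N c (i - 1) + a i) ∧
          leftAbs (m + 1) N c (m + 1) + a (m + 2) = k - 1)).filter
          (fun c : Fin (m + 1) → Fin N =>
            leftAbs (m + 1) N c m + a (m + 1) ≤ leftAbs (m + 1) N c (m + 1)),
        RatFunc.X ^ (2 + ∑ i ∈ Finset.Icc 1 (m + 1), leftAbs (m + 1) N c i) : RatFunc ℚ)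
      = RatFunc.X ^ (k - a (m + 2)) * (∑ c ∈ Finset.univ.filter
        (fun c : Fin m → Fin N' =>
          (∀ i ∈ Finset.Icc 1 m,
            1 ≤ leftAbs m N' c i ∧
              leftAbs m N' c i ≤ leftAbs m N' c (i - 1) + a i) ∧
          leftAbs m N' c m + a (m + 1) = k - 1 - a (m + 2)),
      RatFunc.X ^ (1 + ∑ i ∈ Finset.Icc 1 m, leftAbs m N' c i)) := by
    rw [Finset.mul_sum]
    refine Finset.sum_bij'
      (fun c hc => restrictF c (fun t => by
        have ht := t.isLt
        simp only [Finset.mem_filter, Finset.mem_univ, true_and] at hc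
        obtain ⟨⟨hP1, hP2⟩, hcond⟩ := hc
        have hv : leftAbs (m + 1) N c ((t : ℕ) + 1) = (c (Fin.castSucc t) : ℕ) :=
          leftAbs_succ c (by omega)
        have hbd := leftAbs_bound c a (fun i hi => (hP1 i hi).2) ((t : ℕ) + 1) (by omega)
        have hmono : ∑ u ∈ Finset.Icc 1 ((t : ℕ) + 1), a u ≤ ∑ u ∈ Finset.Icc 1 m, a u :=
          Finset.sum_le_sum_of_subset (Finset.Icc_subset_Icc_right (by omega))
        omega))
      (fun c' hc' => extendF hle c' (leftAbs m N' c' m + a (m + 1)) (by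
        simp only [Finset.mem_filter, Finset.mem_univ, true_and] at hc'
        have hbd := leftAbs_bound c' a (fun i hi => (hc'.1 i hi).2) m le_rfl
        omega))
      ?_ ?_ ?_ ?_ ?_
    · intro c hc
      simp only [Finset.mem_filter, Finset.mem_univ, true_and] at hc ⊢
      obtain ⟨⟨hP1, hP2⟩, hcond⟩ := hc
      have hlast := leftAbs_last c
      have hPm := hP1 (m + 1) (Finset.mem_Icc.mpr ⟨by omega, le_rfl⟩)
      simp only [Nat.add_sub_cancel] at hPm
      refine ⟨fun i hi => ?_, ?_⟩
      · rw [Finset.mem_Icc] at hi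
        rw [leftAbs_restrictF i (by omega), leftAbs_restrictF (i - 1) (by omega)]
        exact hP1 i (Finset.mem_Icc.mpr ⟨hi.1, by omega⟩)
      · rw [leftAbs_restrictF m le_rfl]
        omega
    · intro c' hc'
      simp only [Finset.mem_filter, Finset.mem_univ, true_and] at hc' ⊢
      obtain ⟨hT1, hT2⟩ := hc'
      have h1m : 1 ≤ leftAbs m N' c' m := by
        cases m with
        | zero => exact le_rfl
        | succ n => exact (hT1 (n + 1) (Finset.mem_Icc.mpr ⟨by omega, le_rfl⟩)).1
      refine ⟨⟨fun i hi => ?_, ?_⟩, ?_⟩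
      · rw [Finset.mem_Icc] at hi
        by_cases him : i ≤ m
        · rw [leftAbs_extendF i him, leftAbs_extendF (i - 1) (by omega)]
          exact hT1 i (Finset.mem_Icc.mpr ⟨hi.1, him⟩)
        · have hieq : i = m + 1 := by omega
          subst hieq
          rw [leftAbs_extendF_last, Nat.add_sub_cancel, leftAbs_extendF m le_rfl]
          exact ⟨by omega, le_rfl⟩
      · rw [leftAbs_extendF_last]
        omega
      · rw [leftAbs_extendF m le_rfl, leftAbs_extendF_last]
    · intro c hc
      simp only [Finset.mem_filter, Finset.mem_univ, true_and] at hc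
      obtain ⟨⟨hP1, hP2⟩, hcond⟩ := hc
      have hlast := leftAbs_last c
      have hPm := hP1 (m + 1) (Finset.mem_Icc.mpr ⟨by omega, le_rfl⟩)
      simp only [Nat.add_sub_cancel] at hPm
      beta_reduce
      rw [extendF_restrictF]
      apply setLast_eq_self
      rw [leftAbs_restrictF m le_rfl]
      omega
    · intro c' hc'
      beta_reduce
      rw [restrictF_extendF]
    · intro c hc
      simp only [Finset.mem_filter, Finset.mem_univ, true_and] at hc
      obtain ⟨⟨hP1, hP2⟩, hcond⟩ := hc
      have hlast := leftAbs_last c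
      beta_reduce
      rw [← pow_add]
      congr 1
      rw [Finset.sum_Icc_succ_top (by omega : 1 ≤ m + 1), sum_leftAbs_restrictF]
      omega
  rw [hmul, hsplit, hgood, hbad]
  ring

/-- for every `k ≥ a_r + 2`,
`G̃_k(a_1,…,a_r) = p·G̃_{k-1}(a_1,…,a_r) - p^{k-a_r}·G̃_{k-1-a_r}(a_1,…,a_{r-1})`. -/
theorem stmt_5 (r : ℕ) (hr : 2 ≤ r) (a : ℕ → ℕ) (k : ℕ) (hk : a r + 2 ≤ k) :
    GtK r a k =
      RatFunc.X * GtK r a (k - 1) -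
        RatFunc.X ^ (k - a r) * GtK (r - 1) a (k - 1 - a r) := by
  obtain ⟨m, rfl⟩ : ∃ m, r = m + 2 := ⟨r - 2, by omega⟩
  exact key m a k (2 + ∑ t ∈ Finset.Icc 1 (m + 1), a t) (2 + ∑ t ∈ Finset.Icc 1 m, a t) rfl rfl hk
end

section
/- Let A(x) := Σ_{n≥0} (−1)^n · p^{n²}·y^{2n}/(p;p)_n · x^n ∈ ℚ(p,y)[[x]]. For n ≥ 0 let c_n(p) := Σ_μ p^{Area(μ)}, where the sum is over all Dyck words μ of size n and Area(μ) := Σ_{i=1}^{n}(i − 1 − d_i(μ)) with d_i(μ) the number of D's preceding the i-th U in μ. Then A(x) · Σ_{n≥0} (p·x·y²)^n · c_n(p) · x^0 = A(p·x); that is, the ratio A(p·x)/A(x) equals Σ_{n≥0} (p·x·y²)^n Σ_{μ ∈ D_n} p^{Area(μ)}, the area generating function of Dyck paths. -/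
attribute [local instance] Classical.propDecidable

/-- The field `ℚ(p,y)`, realized as rational functions in `y` over `ℚ(p)`. -/
abbrev K2 : Type := RatFunc (RatFunc ℚ)

/-- The variable `p` of `ℚ(p,y)`. -/
noncomputable def pv : K2 := RatFunc.C RatFunc.X

/-- The variable `y` of `ℚ(p,y)`. -/
noncomputable def yv : K2 := RatFunc.X

/-- `A(x) = Σ_{n≥0} (-1)^n p^{n²} y^{2n} / (p;p)_n · x^n ∈ ℚ(p,y)[[x]]`. -/
noncomputable def Aser : PowerSeries K2 :=
  PowerSeries.mk fun n =>
    (-1 : K2) ^ n * pv ^ (n ^ 2) * yv ^ (2 * n) /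
      ∏ i ∈ Finset.range n, (1 - pv ^ (i + 1))

/-- A word `w` (with `true = U`, `false = D`) satisfies the ballot condition: every
prefix contains at least as many `U`'s as `D`'s. -/
def prefixCond (L : ℕ) (w : Fin L → Bool) : Prop :=
  ∀ m ∈ Finset.range (L + 1),
    (Finset.univ.filter (fun j : Fin L => (j : ℕ) < m ∧ w j = false)).card ≤
      (Finset.univ.filter (fun j : Fin L => (j : ℕ) < m ∧ w j = true)).card

/-- A Dyck word of size `n`: a word of length `2n` with exactly `n` `U`'s such that
every prefix has at least as many `U`'s as `D`'s. -/
def isDyck (n : ℕ) (w : Fin (2 * n) → Bool) : Prop :=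
  (Finset.univ.filter (fun j => w j = true)).card = n ∧ prefixCond (2 * n) w

/-- `d_i(w)`, the number of `D`'s preceding the `i`-th `U` in `w` (1-indexed `i`). -/
def dCount (n : ℕ) (w : Fin (2 * n) → Bool) (i : ℕ) : ℕ :=
  (Finset.univ.filter (fun j : Fin (2 * n) => w j = false ∧
    (Finset.univ.filter
      (fun j' : Fin (2 * n) => (j' : ℕ) < (j : ℕ) ∧ w j' = true)).card < i)).card

/-- `Area(w) = Σ_{i=1}^{n} (i - 1 - d_i(w))`. -/
def area (n : ℕ) (w : Fin (2 * n) → Bool) : ℕ :=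
  ∑ i ∈ Finset.Icc 1 n, (i - 1 - dCount n w i)

/-- `c_n(p) = Σ_{μ ∈ D_n} p^{Area(μ)}`, the area generating polynomial of Dyck words
of size `n`. -/
noncomputable def dyckArea (n : ℕ) : K2 :=
  ∑ w ∈ Finset.univ.filter (fun w : Fin (2 * n) → Bool => isDyck n w),
    pv ^ area n w

/-
Every Dyck word of size `n + 1` factors uniquely as `U μ₁ D μ₂` with `μ₁`, `μ₂` Dyck words of
sizes `b + e = n`, and `Area(U μ₁ D μ₂) = b + Area(μ₁) + Area(μ₂)`. This is easiest to see from
`Area(μ) = inv(μ) - C(n + 1, 2)`, where `inv(μ)` counts the pairs of a `U` followed (not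
necessarily immediately) by a `D`. Hence `D(x) = Σ (p y² x)^n c_n(p)` satisfies
`D(x) = 1 + p y² x · D(p x) · D(x)`, which determines a power series uniquely.
On the other side, the coefficients `a_n` of `A` satisfy `(p^(n+1) - 1) a_(n+1) = p y² p^(2n) a_n`,
i.e. `A(p x) = A(x) + p y² x · A(p² x)`, and this says exactly that `A(p x) / A(x)` solves the same
equation as `D`.
-/

open Finset PowerSeries

theorem Nat.add_choose_two (m n : ℕ) : (m + n).choose 2 = m.choose 2 + n.choose 2 + m * n := by
  induction n with
  | zero => simp
  | succ n ih =>
    rw [← add_assoc, Nat.choose_succ_succ', ih, Nat.choose_succ_succ' n, Nat.choose_one_right,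
      Nat.choose_one_right]
    ring

theorem Nat.choose_two_add_succ_choose_two (n : ℕ) : n.choose 2 + (n + 1).choose 2 = n * n := by
  induction n with
  | zero => simp
  | succ n ih =>
    have h₁ := Nat.add_choose_two n 1
    have h₂ := Nat.add_choose_two (n + 1) 1
    simp only [mul_one, Nat.choose_succ_self, add_zero] at h₁ h₂
    linarith

theorem sum_Icc_sub_one (n : ℕ) : ∑ i ∈ Icc 1 n, (i - 1) = n.choose 2 := by
  induction n with
  | zero => simp
  | succ n ih =>
    rw [sum_Icc_succ_top (by omega), ih, Nat.choose_succ_succ' n 1, Nat.choose_one_right,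
      Nat.add_sub_cancel, add_comm]

theorem List.count_take_ofFn {α : Type*} [DecidableEq α] {L : ℕ} (w : Fin L → α) (m : ℕ) (b : α) :
    ((List.ofFn w).take m).count b = #{j : Fin L | (j : ℕ) < m ∧ w j = b} := by
  induction L generalizing m with
  | zero => simp
  | succ L ih =>
    rcases m with _ | m
    · simp
    · rw [List.ofFn_succ, List.take_succ_cons, List.count_cons, ih, Fin.card_filter_univ_succ']
      simp [add_comm, beq_iff_eq]

theorem List.count_ofFn {α : Type*} [DecidableEq α] {L : ℕ} (w : Fin L → α) (b : α) :
    (List.ofFn w).count b = #{j : Fin L | w j = b} := by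
  simpa [List.take_of_length_le] using List.count_take_ofFn w L b

def IsBallot (l : List Bool) : Prop :=
  ∀ m, (l.take m).count false ≤ (l.take m).count true

theorem isBallot_ofFn_iff {L : ℕ} (w : Fin L → Bool) : IsBallot (List.ofFn w) ↔ prefixCond L w := by
  simp only [IsBallot, prefixCond, ← List.count_take_ofFn, mem_range, Nat.lt_succ_iff]
  refine ⟨fun h m _ => h m, fun h m => ?_⟩
  rcases le_total m L with hm | hm
  · exact h m hm
  · simpa [List.take_of_length_le, hm] using h L le_rfl

structure IsDyckList (n : ℕ) (l : List Bool) : Prop where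
  count_true : l.count true = n
  count_false : l.count false = n
  isBallot : IsBallot l

theorem isDyck_iff_isDyckList {n : ℕ} (w : Fin (2 * n) → Bool) :
    isDyck n w ↔ IsDyckList n (List.ofFn w) := by
  have hlen := List.count_true_add_count_false (List.ofFn w)
  rw [List.length_ofFn] at hlen
  rw [isDyck, ← isBallot_ofFn_iff, ← List.count_ofFn]
  exact ⟨fun ⟨ht, hb⟩ => ⟨ht, by omega, hb⟩, fun h => ⟨h.count_true, h.isBallot⟩⟩

noncomputable def dyckLists (n : ℕ) : Finset (List Bool) :=
  (univ.filter (isDyck n)).map ⟨List.ofFn, List.ofFn_injective⟩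

theorem mem_dyckLists {n : ℕ} {l : List Bool} : l ∈ dyckLists n ↔ IsDyckList n l := by
  simp only [dyckLists, mem_map, mem_filter, mem_univ, true_and, Function.Embedding.coeFn_mk]
  refine ⟨fun ⟨w, hw, hl⟩ => hl ▸ (isDyck_iff_isDyckList w).1 hw, fun h => ?_⟩
  have hlen : l.length = 2 * n := by
    rw [← List.count_true_add_count_false, h.count_true, h.count_false, two_mul]
  have hl : List.ofFn (fun i : Fin (2 * n) => l[(i : ℕ)]) = l :=
    List.ext_getElem (by simp [hlen]) (by simp)
  exact ⟨_, (isDyck_iff_isDyckList _).2 (by rwa [hl]), hl⟩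

def inversions : List Bool → ℕ
  | [] => 0
  | b :: t => inversions t + if b then t.count false else 0

theorem inversions_append (l₁ l₂ : List Bool) :
    inversions (l₁ ++ l₂) = inversions l₁ + inversions l₂ + l₁.count true * l₂.count false := by
  induction l₁ with
  | nil => simp [inversions]
  | cons b t ih =>
    cases b
    · simp [inversions, ih]
    · simp [inversions, ih]
      ring

theorem inversions_ofFn {L : ℕ} (w : Fin L → Bool) :
    inversions (List.ofFn w) =
      ∑ j : Fin L, if w j = false then ((List.ofFn w).take j).count true else 0 := by
  induction L with
  | zero => simp [inversions]
  | succ L ih =>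
    rw [Fin.sum_univ_succ, List.ofFn_succ, inversions, ih]
    simp only [Fin.val_zero, List.take_zero, Fin.val_succ, List.take_succ_cons, List.count_cons,
      List.count_nil, List.count_ofFn]
    cases w 0 <;> simp [sum_add_distrib, ← sum_filter]

def upsBefore {L : ℕ} (w : Fin L → Bool) (j : Fin L) : ℕ :=
  #{j' : Fin L | (j' : ℕ) < j ∧ w j' = true}

theorem dCount_eq (n : ℕ) (w : Fin (2 * n) → Bool) (i : ℕ) :
    dCount n w i = #{j | w j = false ∧ upsBefore w j < i} := rfl

theorem dCount_le {n : ℕ} {w : Fin (2 * n) → Bool} (hw : prefixCond (2 * n) w) (i : ℕ) :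
    dCount n w i ≤ i - 1 := by
  rw [dCount_eq]
  set S := ({j | w j = false ∧ upsBefore w j < i} : Finset (Fin (2 * n)))
  rcases S.eq_empty_or_nonempty with hS | hS
  · simp [hS]
  -- every counted down step lies weakly before the last one, `j₀`; apply the ballot condition there
  obtain ⟨j₀, hj₀, hmax⟩ := S.exists_max_image (fun j => (j : ℕ)) hS
  simp only [S, mem_filter, mem_univ, true_and] at hj₀ hmax
  calc #S ≤ #{j : Fin (2 * n) | (j : ℕ) < j₀ + 1 ∧ w j = false} := by
        refine card_le_card fun j hj => ?_
        simp only [S, mem_filter, mem_univ, true_and] at hj ⊢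
        exact ⟨Nat.lt_succ_of_le (hmax j hj), hj.1⟩
    _ ≤ #{j : Fin (2 * n) | (j : ℕ) < j₀ + 1 ∧ w j = true} := hw _ (by simp)
    _ ≤ upsBefore w j₀ := by
        refine card_le_card fun j hj => ?_
        simp only [mem_filter, mem_univ, true_and] at hj ⊢
        refine ⟨lt_of_le_of_ne (Nat.lt_succ_iff.1 hj.1) fun h => ?_, hj.2⟩
        rw [Fin.ext h] at hj
        simp [hj₀.1] at hj
    _ ≤ i - 1 := by omega

theorem upsBefore_le {n : ℕ} {w : Fin (2 * n) → Bool} (hw : isDyck n w) (j : Fin (2 * n)) :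
    upsBefore w j ≤ n := by
  refine le_of_le_of_eq (card_le_card fun j' hj' => ?_) hw.1
  simp only [mem_filter, mem_univ, true_and] at hj' ⊢
  exact hj'.2

theorem sum_dCount (n : ℕ) (w : Fin (2 * n) → Bool) :
    ∑ i ∈ Icc 1 n, dCount n w i = ∑ j with w j = false, (n - upsBefore w j) := by
  simp_rw [dCount_eq, ← filter_filter, card_filter]
  rw [sum_comm]
  refine sum_congr rfl fun j _ => ?_
  rw [← card_filter, show (Icc 1 n).filter (upsBefore w j < ·) = Icc (upsBefore w j + 1) n by
    ext i; simp only [mem_filter, mem_Icc]; omega, Nat.card_Icc]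
  omega

theorem area_add_choose_two {n : ℕ} {w : Fin (2 * n) → Bool} (hw : isDyck n w) :
    area n w + (n + 1).choose 2 = inversions (List.ofFn w) := by
  have hdown : #{j | w j = false} = n := by
    rw [← List.count_ofFn, ((isDyck_iff_isDyckList w).1 hw).count_false]
  have hinv : inversions (List.ofFn w) = ∑ j with w j = false, upsBefore w j := by
    rw [inversions_ofFn, sum_filter]
    simp only [List.count_take_ofFn, upsBefore]
  have harea : area n w + ∑ i ∈ Icc 1 n, dCount n w i = n.choose 2 := by
    rw [area, ← sum_add_distrib, ← sum_Icc_sub_one]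
    exact sum_congr rfl fun i hi => Nat.sub_add_cancel (dCount_le hw.2 i)
  have hpairs : ∑ j with w j = false, (n - upsBefore w j) + ∑ j with w j = false, upsBefore w j
      = n * n := by
    rw [← sum_add_distrib, sum_congr rfl fun j _ => Nat.sub_add_cancel (upsBefore_le hw j),
      sum_const, hdown, smul_eq_mul]
  have := Nat.choose_two_add_succ_choose_two n
  rw [sum_dCount] at harea
  omega

def listArea (l : List Bool) : ℕ :=
  inversions l - (l.count true + 1).choose 2

theorem area_eq_listArea {n : ℕ} {w : Fin (2 * n) → Bool} (hw : isDyck n w) :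
    area n w = listArea (List.ofFn w) := by
  rw [listArea, ((isDyck_iff_isDyckList w).1 hw).count_true, ← area_add_choose_two hw,
    Nat.add_sub_cancel]

theorem dyckArea_eq_sum_dyckLists (n : ℕ) :
    dyckArea n = ∑ l ∈ dyckLists n, pv ^ listArea l := by
  rw [dyckLists, sum_map]
  exact sum_congr rfl fun w hw => by rw [area_eq_listArea (mem_filter.1 hw).2]; rfl

theorem IsDyckList.choose_two_le_inversions {n : ℕ} {l : List Bool} (h : IsDyckList n l) :
    (n + 1).choose 2 ≤ inversions l := by
  obtain ⟨w, hw, rfl⟩ := mem_map.1 (mem_dyckLists.2 h)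
  rw [Function.Embedding.coeFn_mk, ← area_add_choose_two (mem_filter.1 hw).2]
  exact Nat.le_add_left _ _

theorem IsDyckList.cons_append {b e : ℕ} {l₁ l₂ : List Bool} (h₁ : IsDyckList b l₁)
    (h₂ : IsDyckList e l₂) : IsDyckList (b + e + 1) (true :: l₁ ++ false :: l₂) := by
  refine ⟨?_, ?_, fun m => ?_⟩
  · simp [h₁.count_true, h₂.count_true]
  · simp [h₁.count_false, h₂.count_false, add_assoc]
  rcases m with _ | m
  · simp
  rw [List.cons_append, List.take_succ_cons]
  rcases le_or_gt m l₁.length with hm | hm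
  · have := h₁.isBallot m
    simp [List.take_append_of_le_length hm]
    omega
  · obtain ⟨k, rfl⟩ := Nat.exists_eq_add_of_lt hm
    have := h₂.isBallot k
    rw [add_assoc, List.take_length_add_append, List.take_succ_cons]
    simp [h₁.count_true, h₁.count_false]
    omega

theorem IsDyckList.listArea_cons_append {b e : ℕ} {l₁ l₂ : List Bool} (h₁ : IsDyckList b l₁)
    (h₂ : IsDyckList e l₂) :
    listArea (true :: l₁ ++ false :: l₂) = b + listArea l₁ + listArea l₂ := by
  have hinv : inversions (true :: l₁ ++ false :: l₂) =
      inversions l₁ + inversions l₂ + (b + 1) * (e + 1) + b := by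
    simp only [List.cons_append, inversions, inversions_append, List.count_append,
      List.count_cons, h₁.count_true, h₁.count_false, h₂.count_false]
    simp; ring
  have hchoose := Nat.add_choose_two (b + 1) (e + 1)
  have := h₁.choose_two_le_inversions
  have := h₂.choose_two_le_inversions
  rw [listArea, listArea, listArea, (h₁.cons_append h₂).count_true, h₁.count_true,
    h₂.count_true, hinv, show b + e + 1 + 1 = b + 1 + (e + 1) by ring, hchoose]
  omega

theorem exists_eq_append_false_cons {t : List Bool} (h : t.count true < t.count false) :
    ∃ l₁ l₂, t = l₁ ++ false :: l₂ ∧ IsDyckList (l₁.count true) l₁ := by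
  classical
  have hex : ∃ m, (t.take (m + 1)).count true < (t.take (m + 1)).count false :=
    ⟨t.length, by rwa [List.take_of_length_le (by omega)]⟩
  -- cut `t` just before its shortest prefix with more down steps than up steps
  set m := Nat.find hex
  have hballot : IsBallot (t.take m) := by
    intro k
    rw [List.take_take]
    rcases Nat.eq_zero_or_eq_succ_pred (min k m) with h0 | hk
    · simp [h0]
    · rw [hk]
      exact not_lt.1 (Nat.find_min hex (by omega))
  have hm : m < t.length := by
    by_contra! hm
    have hlast := Nat.find_spec hex
    have hall := hballot t.length
    rw [List.take_of_length_le (by omega)] at hlast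
    rw [List.take_take, List.take_of_length_le (by omega)] at hall
    omega
  have hfirst := Nat.find_spec hex
  have hbal := hballot m
  rw [List.take_succ_eq_append_getElem hm] at hfirst
  rw [List.take_take, min_self] at hbal
  have hdown : t[m] = false := by
    cases hx : t[m] <;> simp [hx] at hfirst ⊢
    omega
  simp only [hdown, List.count_append, List.count_singleton] at hfirst
  refine ⟨t.take m, t.drop (m + 1), ?_, rfl, by simp at hfirst; omega, hballot⟩
  rw [← hdown, List.getElem_cons_drop hm, List.take_append_drop]

theorem length_le_of_append_false_cons {l₁ l₂ l₁' l₂' : List Bool}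
    (h₁ : l₁.count true = l₁.count false) (h₁' : IsBallot l₁')
    (h : l₁ ++ false :: l₂ = l₁' ++ false :: l₂') : l₁'.length ≤ l₁.length := by
  by_contra! hlt
  have := h₁' (l₁.length + 1)
  rw [← List.take_append_of_le_length (l₂ := false :: l₂') hlt, ← h, Nat.succ_eq_add_one,
    List.take_length_add_append] at this
  simp at this
  omega

theorem IsDyckList.append_false_cons_inj {b b' : ℕ} {l₁ l₂ l₁' l₂' : List Bool}
    (h₁ : IsDyckList b l₁) (h₁' : IsDyckList b' l₁')
    (h : l₁ ++ false :: l₂ = l₁' ++ false :: l₂') : l₁ = l₁' ∧ l₂ = l₂' := by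
  have hlen := le_antisymm
    (length_le_of_append_false_cons (h₁'.count_true.trans h₁'.count_false.symm) h₁.isBallot h.symm)
    (length_le_of_append_false_cons (h₁.count_true.trans h₁.count_false.symm) h₁'.isBallot h)
  obtain ⟨rfl, hl₂⟩ := List.append_inj h hlen
  exact ⟨rfl, List.cons_injective hl₂⟩

theorem IsDyckList.exists_cons_append {n : ℕ} {l : List Bool} (h : IsDyckList (n + 1) l) :
    ∃ b e l₁ l₂, b + e = n ∧ IsDyckList b l₁ ∧ IsDyckList e l₂ ∧
      l = true :: l₁ ++ false :: l₂ := by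
  obtain ⟨hT, hF, hballot⟩ := h
  rcases l with _ | ⟨_ | _, t⟩
  · simp at hT
  · simpa using hballot 1
  simp only [List.count_cons, beq_self_eq_true, if_true, Bool.true_beq, Bool.false_eq_true] at hT hF
  obtain ⟨l₁, l₂, rfl, h₁⟩ := exists_eq_append_false_cons (t := t) (by simp at hF; omega)
  have h₂ : IsDyckList (n - l₁.count true) l₂ := by
    refine ⟨?_, ?_, fun m => ?_⟩
    · simp at hT; omega
    · simp [h₁.count_false] at hF; omega
    have := hballot (l₁.length + m + 2)
    rw [List.take_succ_cons, add_assoc, List.take_length_add_append, List.take_succ_cons] at this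
    simp [h₁.count_false] at this
    omega
  exact ⟨_, _, l₁, l₂, by simp at hT; omega, h₁, h₂, rfl⟩

theorem dyckArea_zero : dyckArea 0 = 1 := by
  simp [dyckArea, area, isDyck, prefixCond]

theorem dyckArea_succ (n : ℕ) :
    dyckArea (n + 1) = ∑ q ∈ antidiagonal n, pv ^ q.1 * dyckArea q.1 * dyckArea q.2 := by
  have hsplit : ∑ x ∈ (antidiagonal n).sigma fun q => dyckLists q.1 ×ˢ dyckLists q.2,
      pv ^ (x.1.1 + listArea x.2.1 + listArea x.2.2) = dyckArea (n + 1) := by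
    rw [dyckArea_eq_sum_dyckLists]
    refine sum_bij (fun x _ => true :: x.2.1 ++ false :: x.2.2) ?_ ?_ ?_ ?_
    · rintro ⟨⟨b, e⟩, l₁, l₂⟩ hx
      simp only [mem_sigma, mem_product, HasAntidiagonal.mem_antidiagonal, mem_dyckLists] at hx
      exact mem_dyckLists.2 (hx.1 ▸ hx.2.1.cons_append hx.2.2)
    · rintro ⟨⟨b, e⟩, l₁, l₂⟩ hx ⟨⟨b', e'⟩, l₁', l₂'⟩ hx' heq
      simp only [mem_sigma, mem_product, HasAntidiagonal.mem_antidiagonal, mem_dyckLists] at hx hx'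
      simp only [List.cons_append, List.cons.injEq, true_and] at heq
      obtain ⟨rfl, rfl⟩ := hx.2.1.append_false_cons_inj hx'.2.1 heq
      obtain rfl : b = b' := hx.2.1.count_true.symm.trans hx'.2.1.count_true
      obtain rfl : e = e' := by omega
      rfl
    · intro l hl
      obtain ⟨b, e, l₁, l₂, hbe, h₁, h₂, rfl⟩ := (mem_dyckLists.1 hl).exists_cons_append
      exact ⟨⟨(b, e), l₁, l₂⟩, by simp [mem_dyckLists, hbe, h₁, h₂], rfl⟩
    · rintro ⟨⟨b, e⟩, l₁, l₂⟩ hx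
      simp only [mem_sigma, mem_product, HasAntidiagonal.mem_antidiagonal, mem_dyckLists] at hx
      rw [hx.2.1.listArea_cons_append hx.2.2]
  rw [← hsplit, sum_sigma]
  refine sum_congr rfl fun q _ => ?_
  rw [sum_product, dyckArea_eq_sum_dyckLists, dyckArea_eq_sum_dyckLists, mul_assoc, sum_mul_sum,
    mul_sum]
  simp only [mul_sum, pow_add, mul_assoc]

section FunctionalEquation

variable {R : Type*} [CommRing R] (a c : R)

theorem eq_one_add_X_mul_rescale_iff {F : R⟦X⟧} :
    F = 1 + C c * X * (rescale a F * F) ↔ coeff 0 F = 1 ∧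
      ∀ n, coeff (n + 1) F = c * ∑ q ∈ antidiagonal n, a ^ q.1 * coeff q.1 F * coeff q.2 F := by
  have hcoeff (n : ℕ) : coeff (n + 1) (1 + C c * X * (rescale a F * F)) =
      c * ∑ q ∈ antidiagonal n, a ^ q.1 * coeff q.1 F * coeff q.2 F := by
    rw [map_add, coeff_one, if_neg n.succ_ne_zero, zero_add, mul_assoc, coeff_C_mul,
      coeff_succ_X_mul, coeff_mul]
    simp only [coeff_rescale, mul_assoc]
  constructor
  · intro hF
    refine ⟨by rw [hF]; simp, fun n => ?_⟩
    conv_lhs => rw [hF]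
    exact hcoeff n
  · rintro ⟨h0, hsucc⟩
    ext (_ | n)
    · simp [h0]
    · rw [hsucc, hcoeff]

theorem eq_of_eq_one_add_X_mul_rescale {F G : R⟦X⟧}
    (hF : F = 1 + C c * X * (rescale a F * F)) (hG : G = 1 + C c * X * (rescale a G * G)) :
    F = G := by
  rw [eq_one_add_X_mul_rescale_iff] at hF hG
  ext n
  induction n using Nat.strong_induction_on with
  | _ n ih =>
    rcases n with _ | n
    · rw [hF.1, hG.1]
    · rw [hF.2, hG.2]
      refine congrArg _ (sum_congr rfl fun q hq => ?_)
      have hq : q.1 + q.2 = n := HasAntidiagonal.mem_antidiagonal.1 hq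
      rw [ih q.1 (by omega), ih q.2 (by omega)]

theorem mk_pow_mul_eq_one_add_X_mul_rescale {d : ℕ → R} (h0 : d 0 = 1)
    (hsucc : ∀ n, d (n + 1) = ∑ q ∈ antidiagonal n, a ^ q.1 * d q.1 * d q.2) :
    PowerSeries.mk (fun n => c ^ n * d n) = 1 + C c * X *
      (rescale a (PowerSeries.mk fun n => c ^ n * d n) * PowerSeries.mk fun n => c ^ n * d n) := by
  refine (eq_one_add_X_mul_rescale_iff a c).2 ⟨by simp [h0], fun n => ?_⟩
  simp only [coeff_mk, hsucc, mul_sum]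
  refine sum_congr rfl fun q hq => ?_
  rw [← HasAntidiagonal.mem_antidiagonal.1 hq]
  ring

end FunctionalEquation

theorem mul_eq_rescale_of_eq_one_add_X_mul_rescale {K : Type*} [Field K] (a c : K)
    {A D : K⟦X⟧} (hA0 : constantCoeff A ≠ 0)
    (hA : rescale a A = A + C c * X * rescale a (rescale a A))
    (hD : D = 1 + C c * X * (rescale a D * D)) :
    A * D = rescale a A := by
  -- `E = A(ax)/A(x)` solves the same equation as `D`
  set E := rescale a A * A⁻¹
  have hE : E = 1 + C c * X * (rescale a E * E) := by
    have hinv : rescale a A⁻¹ * rescale a A = 1 := by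
      rw [← map_mul, PowerSeries.inv_mul_cancel A hA0, map_one]
    calc E = (A + C c * X * rescale a (rescale a A)) * A⁻¹ := by rw [← hA]
      _ = 1 + C c * X * (rescale a (rescale a A) * (rescale a A⁻¹ * rescale a A) * A⁻¹) := by
        rw [hinv, mul_one, add_mul, PowerSeries.mul_inv_cancel A hA0, mul_assoc]
      _ = 1 + C c * X * (rescale a E * E) := by
        simp only [E, map_mul]
        ring
  rw [eq_of_eq_one_add_X_mul_rescale a c hD hE, mul_left_comm, PowerSeries.mul_inv_cancel A hA0,
    mul_one]

theorem pv_pow_ne_one {k : ℕ} (hk : k ≠ 0) : pv ^ k ≠ 1 := by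
  intro h
  rw [pv, ← map_pow, ← map_one RatFunc.C, RatFunc.C_injective.eq_iff,
    ← RatFunc.algebraMap_X, ← map_pow, ← map_one (algebraMap (Polynomial ℚ) (RatFunc ℚ)),
    (RatFunc.algebraMap_injective ℚ).eq_iff] at h
  simpa [hk] using congrArg Polynomial.natDegree h

theorem rescale_Aser :
    rescale pv Aser = Aser + C (pv * yv ^ 2) * X * rescale pv (rescale pv Aser) := by
  ext (_ | n)
  · simp
  have hprod : ∏ i ∈ range n, (1 - pv ^ (i + 1)) ≠ 0 :=
    prod_ne_zero_iff.2 fun i _ => sub_ne_zero.2 (pv_pow_ne_one i.succ_ne_zero).symm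
  have hlast : 1 - pv ^ (n + 1) ≠ 0 := sub_ne_zero.2 (pv_pow_ne_one n.succ_ne_zero).symm
  simp only [coeff_rescale, map_add, mul_assoc, coeff_C_mul, coeff_succ_X_mul, Aser, coeff_mk,
    prod_range_succ]
  field_simp
  ring

/-- `A(x) · Σ_{n≥0} (p·y²)^n c_n(p) x^n = A(p·x)`, i.e. `A(p·x)/A(x)` is
the area generating function of Dyck paths. -/
theorem stmt_10 :
    Aser * PowerSeries.mk (fun n => (pv * yv ^ 2) ^ n * dyckArea n) =
      PowerSeries.rescale pv Aser :=
  mul_eq_rescale_of_eq_one_add_X_mul_rescale pv (pv * yv ^ 2) (by simp [Aser]) rescale_Aser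
    (mk_pow_mul_eq_one_add_X_mul_rescale pv _ dyckArea_zero dyckArea_succ)
end
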